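/- arXiv:1403.2073 — 2 statements merged into one kernel-verified Lean document; each statement's English description precedes it below -/
import Mathlib

section
/- Let L ≥ 1 and let D_1, D_0 be real diagonal L×L matrices with diagonal entries d1_0,…,d1_{L−1} and d0_0,…,d0_{L−1} respectively, where every d0_l > 0. Let l_min be an index at which the ratio d1_l/d0_l attains its minimum. Then for every nonzero g ∈ ℝ^L, (gᵀ D_1 g)/(gᵀ D_0 g) ≥ d1_{l_min}/d0_{l_min}. Moreover, if the ratios d1_l/d0_l are pairwise distinct, equality holds if and only if g is a nonzero scalar multiple of the standard basis vector e_{l_min}. -/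
/-!
With `r := d1 lmin / d0 lmin` we have `r * d0 l ≤ d1 l` for every `l`, so
`gᵀ D₁ g - r gᵀ D₀ g = ∑ l, (d1 l - r * d0 l) g_l²` is a sum of nonnegative terms, while
`gᵀ D₀ g > 0`. When the ratios are distinct, every coefficient `d1 l - r * d0 l` with
`l ≠ lmin` is positive, so the sum vanishes only if `g` is supported on `lmin`.
-/

open Matrix

namespace Matrix

variable {ι : Type*} [Fintype ι] [DecidableEq ι]

theorem dotProduct_diagonal_mulVec_self {R : Type*} [CommSemiring R] (d g : ι → R) :
    g ⬝ᵥ (diagonal d *ᵥ g) = ∑ i, d i * g i ^ 2 := by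
  simp only [dotProduct, mulVec_diagonal]
  exact Finset.sum_congr rfl fun i _ => by ring

theorem dotProduct_diagonal_mulVec_self_pos {d g : ι → ℝ} (hd : ∀ i, 0 < d i) (hg : g ≠ 0) :
    0 < g ⬝ᵥ (diagonal d *ᵥ g) :=
  (posDef_diagonal_iff.mpr hd).dotProduct_mulVec_pos hg

end Matrix

section WeightedSumOfSquares

variable {ι : Type*} [Fintype ι]

theorem sum_mul_sq_sub_mul_sum_mul_sq (d1 d0 g : ι → ℝ) (r : ℝ) :
    ∑ i, d1 i * g i ^ 2 - r * ∑ i, d0 i * g i ^ 2 = ∑ i, (d1 i - r * d0 i) * g i ^ 2 := by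
  rw [Finset.mul_sum, ← Finset.sum_sub_distrib]
  exact Finset.sum_congr rfl fun i _ => by ring

theorem sum_mul_sq_nonneg {e : ι → ℝ} (he : ∀ i, 0 ≤ e i) (g : ι → ℝ) :
    0 ≤ ∑ i, e i * g i ^ 2 :=
  Finset.sum_nonneg fun i _ => mul_nonneg (he i) (sq_nonneg _)

theorem eq_smul_single_of_sum_mul_sq_eq_zero [DecidableEq ι] {e g : ι → ℝ} {j : ι}
    (hej : 0 ≤ e j) (he : ∀ i, i ≠ j → 0 < e i) (h : ∑ i, e i * g i ^ 2 = 0) :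
    g = g j • Pi.single j 1 := by
  have he_nonneg : ∀ i, 0 ≤ e i := fun i => by
    rcases eq_or_ne i j with rfl | hi
    exacts [hej, (he i hi).le]
  have hterm := (Finset.sum_eq_zero_iff_of_nonneg
    fun i _ => mul_nonneg (he_nonneg i) (sq_nonneg (g i))).mp h
  funext i
  rcases eq_or_ne i j with rfl | hi
  · simp
  · have hgi : g i ^ 2 = 0 := (mul_eq_zero.mp (hterm i (Finset.mem_univ i))).resolve_left
      (he i hi).ne'
    simp [hi, pow_eq_zero_iff two_ne_zero |>.mp hgi]

theorem sum_mul_sq_smul_single [DecidableEq ι] (d : ι → ℝ) (c : ℝ) (j : ι) :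
    ∑ i, d i * (c • Pi.single j 1 : ι → ℝ) i ^ 2 = d j * c ^ 2 := by
  rw [Finset.sum_eq_single j (fun i _ hi => by simp [hi]) (by simp)]
  simp

end WeightedSumOfSquares

section RayleighQuotient

variable {ι : Type*} [Fintype ι] [DecidableEq ι] {d1 d0 : ι → ℝ} {r : ℝ}

theorem le_div_dotProduct_diagonal_mulVec (hd0 : ∀ i, 0 < d0 i) (hr : ∀ i, r * d0 i ≤ d1 i)
    {g : ι → ℝ} (hg : g ≠ 0) :
    r ≤ (g ⬝ᵥ (diagonal d1 *ᵥ g)) / (g ⬝ᵥ (diagonal d0 *ᵥ g)) := by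
  rw [le_div_iff₀ (dotProduct_diagonal_mulVec_self_pos hd0 hg), ← sub_nonneg,
    dotProduct_diagonal_mulVec_self, dotProduct_diagonal_mulVec_self,
    sum_mul_sq_sub_mul_sum_mul_sq]
  exact sum_mul_sq_nonneg (fun i => sub_nonneg.mpr (hr i)) g

theorem div_dotProduct_diagonal_mulVec_eq_iff (hd0 : ∀ i, 0 < d0 i) {j : ι}
    (hj : d1 j / d0 j = r) (hr : ∀ i, i ≠ j → r * d0 i < d1 i) {g : ι → ℝ} (hg : g ≠ 0) :
    (g ⬝ᵥ (diagonal d1 *ᵥ g)) / (g ⬝ᵥ (diagonal d0 *ᵥ g)) = r ↔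
      ∃ c : ℝ, c ≠ 0 ∧ g = c • Pi.single j 1 := by
  have hQ0 := dotProduct_diagonal_mulVec_self_pos hd0 hg
  rw [div_eq_iff hQ0.ne', ← sub_eq_zero, dotProduct_diagonal_mulVec_self,
    dotProduct_diagonal_mulVec_self, sum_mul_sq_sub_mul_sum_mul_sq]
  have hrj : d1 j - r * d0 j = 0 := by
    rw [← hj, div_mul_cancel₀ _ (hd0 j).ne', sub_self]
  constructor
  · intro h
    have hg_eq :=
      eq_smul_single_of_sum_mul_sq_eq_zero (e := fun i => d1 i - r * d0 i) hrj.ge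
      (fun i hi => sub_pos.mpr (hr i hi)) h
    refine ⟨g j, fun hgj => hg ?_, hg_eq⟩
    rw [hg_eq, hgj, zero_smul]
  · rintro ⟨c, -, rfl⟩
    rw [sum_mul_sq_smul_single, hrj, zero_mul]

end RayleighQuotient

theorem stmt_2_general (L : ℕ) (d1 d0 : Fin L → ℝ) (hd0 : ∀ l, 0 < d0 l)
    (lmin : Fin L) (hmin : ∀ l, d1 lmin / d0 lmin ≤ d1 l / d0 l) :
    (∀ g : Fin L → ℝ, g ≠ 0 →
      d1 lmin / d0 lmin ≤
        (g ⬝ᵥ (Matrix.diagonal d1 *ᵥ g)) / (g ⬝ᵥ (Matrix.diagonal d0 *ᵥ g))) ∧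
    ((∀ i j : Fin L, i ≠ j → d1 i / d0 i ≠ d1 j / d0 j) →
      ∀ g : Fin L → ℝ, g ≠ 0 →
        ((g ⬝ᵥ (Matrix.diagonal d1 *ᵥ g)) / (g ⬝ᵥ (Matrix.diagonal d0 *ᵥ g)) =
            d1 lmin / d0 lmin ↔
          ∃ c : ℝ, c ≠ 0 ∧ g = c • (Pi.single lmin 1 : Fin L → ℝ))) := by
  refine ⟨fun g hg => le_div_dotProduct_diagonal_mulVec hd0
      (fun l => (le_div_iff₀ (hd0 l)).mp (hmin l)) hg, fun hdist g hg => ?_⟩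
  have hstrict : ∀ l, l ≠ lmin → d1 lmin / d0 lmin * d0 l < d1 l := fun l hl =>
    (lt_div_iff₀ (hd0 l)).mp ((hmin l).lt_of_ne (hdist l lmin hl).symm)
  exact div_dotProduct_diagonal_mulVec_eq_iff hd0 rfl hstrict hg

/-- For diagonal matrices `D₁ = diagonal d1`, `D₀ = diagonal d0` with `d0 l > 0`,
and `lmin` minimizing the ratio `d1 l / d0 l`, every nonzero `g` satisfies
`(gᵀ D₁ g)/(gᵀ D₀ g) ≥ d1 lmin / d0 lmin`; if the ratios are pairwise distinct,
equality holds iff `g` is a nonzero scalar multiple of `e_{lmin}`. -/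
theorem stmt_2 (L : ℕ) (hL : 1 ≤ L) (d1 d0 : Fin L → ℝ) (hd0 : ∀ l, 0 < d0 l)
    (lmin : Fin L) (hmin : ∀ l, d1 lmin / d0 lmin ≤ d1 l / d0 l) :
    (∀ g : Fin L → ℝ, g ≠ 0 →
      d1 lmin / d0 lmin ≤
        (g ⬝ᵥ (Matrix.diagonal d1 *ᵥ g)) / (g ⬝ᵥ (Matrix.diagonal d0 *ᵥ g))) ∧
    ((∀ i j : Fin L, i ≠ j → d1 i / d0 i ≠ d1 j / d0 j) →
      ∀ g : Fin L → ℝ, g ≠ 0 →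
        ((g ⬝ᵥ (Matrix.diagonal d1 *ᵥ g)) / (g ⬝ᵥ (Matrix.diagonal d0 *ᵥ g)) =
            d1 lmin / d0 lmin ↔
          ∃ c : ℝ, c ≠ 0 ∧ g = c • (Pi.single lmin 1 : Fin L → ℝ))) :=
  stmt_2_general L d1 d0 hd0 lmin hmin
end

section
/- Under the noisy mixing model with stationary uncorrelated sources and white noise (as specified in the context), let b_0 = 1, b_1,…,b_P ∈ ℝ and d_0 = 1, d_1,…,d_{P_d} ∈ ℝ define two linear predictors with errors e[n] = y[n] − Σ_{p=1}^P b_p y[n−p] and f[n] = y[n] − Σ_{p=1}^{P_d} d_p y[n−p], and set q_c = Σ_{p=0}^P b_p², a_c = Σ_{p=0}^{P_d} d_p². Let g = Aᵀ w, r̂_l = Σ_{p,q=0, p≠q}^{P} s_{pq} b_p b_q ρ_l[q−p] and r̃_l = Σ_{p,q=0, p≠q}^{P_d} s_{pq} d_p d_q ρ_l[q−p]. If Σ_l g_l² r̃_l ≠ 0, then the dual-linear-predictor cost satisfies (q_c E[y[n]²] − E[e[n]²]) / (a_c E[y[n]²] − E[f[n]²]) = (Σ_l g_l² r̂_l)/(Σ_l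 g_l² r̃_l). In particular this ratio does not depend on the noise variance σ_v². -/
/-!
The output `y = gᵀ s + wᵀ v` is a stationary process with autocorrelation
`R k = ∑ l, g l² ρ l k + σ_v² ‖w‖² δ_k`. For a predictor with `b 0 = 1` and error filter
`c = (1, -b 1, …, -b P)`, `E[e²] = ∑ p q, c p c q R (q - p)`, so `q_c E[y²] - E[e²]` is minus the
off-diagonal part of this quadratic form, i.e. `∑_{p ≠ q} s_pq b p b q R (q - p)`. White noise
only contributes to the diagonal `q - p = 0`, so it drops out, and linearity in `R` gives
`∑ l, g l² r̂ l`; the same holds for the second predictor.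
-/

open Matrix MeasureTheory Finset

section Bilinear

variable {Ω ι κ : Type*}

theorem sum_mul_sum_eq_sum_sum (s : Finset ι) (t : Finset κ) (a : ι → ℝ) (b : κ → ℝ)
    (x : ι → ℝ) (y : κ → ℝ) :
    (∑ i ∈ s, a i * x i) * (∑ j ∈ t, b j * y j) = ∑ i ∈ s, ∑ j ∈ t, a i * b j * (x i * y j) := by
  rw [sum_mul_sum]
  exact sum_congr rfl fun i _ => sum_congr rfl fun j _ => mul_mul_mul_comm _ _ _ _

variable [MeasurableSpace Ω] {μ : Measure Ω} (s : Finset ι) (t : Finset κ) (a : ι → ℝ)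
  (b : κ → ℝ) {X : ι → Ω → ℝ} {Y : κ → Ω → ℝ}

theorem integrable_sum_mul_sum (h : ∀ i ∈ s, ∀ j ∈ t, Integrable (fun ω => X i ω * Y j ω) μ) :
    Integrable (fun ω => (∑ i ∈ s, a i * X i ω) * (∑ j ∈ t, b j * Y j ω)) μ := by
  simp only [sum_mul_sum_eq_sum_sum]
  exact integrable_finsetSum _ fun i hi => integrable_finsetSum _ fun j hj =>
    (h i hi j hj).const_mul _

theorem integral_sum_mul_sum (h : ∀ i ∈ s, ∀ j ∈ t, Integrable (fun ω => X i ω * Y j ω) μ) :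
    ∫ ω, (∑ i ∈ s, a i * X i ω) * (∑ j ∈ t, b j * Y j ω) ∂μ =
      ∑ i ∈ s, ∑ j ∈ t, a i * b j * ∫ ω, X i ω * Y j ω ∂μ := by
  simp only [sum_mul_sum_eq_sum_sum]
  rw [integral_finsetSum _ fun i hi => integrable_finsetSum _ fun j hj =>
    (h i hi j hj).const_mul _]
  refine sum_congr rfl fun i hi => ?_
  rw [integral_finsetSum _ fun j hj => (h i hi j hj).const_mul _]
  simp only [integral_const_mul]

end Bilinear

/-- The paper's `r̂_l` (resp. `r̃_l`) is `offDiagCorr b P (ρ l)` (resp. `offDiagCorr d P_d (ρ l)`). -/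
def offDiagCorr (b : ℕ → ℝ) (P : ℕ) (R : ℤ → ℝ) : ℝ :=
  ∑ p ∈ range (P + 1), ∑ q ∈ range (P + 1),
    if p ≠ q then (if p = 0 ∨ q = 0 then (1 : ℝ) else -1) * b p * b q * R ((q : ℤ) - (p : ℤ))
    else 0

theorem offDiagCorr_add_ite_zero (b : ℕ → ℝ) (P : ℕ) (R : ℤ → ℝ) (c : ℝ) :
    offDiagCorr b P (fun k => R k + if k = 0 then c else 0) = offDiagCorr b P R := by
  refine sum_congr rfl fun p _ => sum_congr rfl fun q _ => ?_
  by_cases hpq : p = q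
  · simp [hpq]
  · have hqp : (q : ℤ) - p ≠ 0 := by omega
    simp [hpq, hqp]

theorem offDiagCorr_sum_mul {ι : Type*} (b : ℕ → ℝ) (P : ℕ) (s : Finset ι) (a : ι → ℝ)
    (R : ι → ℤ → ℝ) :
    offDiagCorr b P (fun k => ∑ l ∈ s, a l * R l k) = ∑ l ∈ s, a l * offDiagCorr b P (R l) := by
  simp only [offDiagCorr, mul_sum]
  rw [sum_comm (s := s)]
  refine sum_congr rfl fun p _ => ?_
  rw [sum_comm (s := s)]
  refine sum_congr rfl fun q _ => ?_
  split_ifs <;> simp [mul_left_comm]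

section PredictionError

def predErrorCoeff (b : ℕ → ℝ) (p : ℕ) : ℝ := if p = 0 then 1 else -b p

variable {b : ℕ → ℝ}

theorem sub_sum_Icc_eq_sum_range_predErrorCoeff (N : ℕ) (u : ℕ → ℝ) :
    u 0 - ∑ p ∈ Icc 1 N, b p * u p = ∑ p ∈ range (N + 1), predErrorCoeff b p * u p := by
  have hrange : range (N + 1) = insert 0 (Icc 1 N) := by
    ext p; simp; omega
  rw [hrange, sum_insert (by simp), predErrorCoeff, if_pos rfl, one_mul, sub_eq_add_neg,
    ← sum_neg_distrib]
  congr 1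
  refine sum_congr rfl fun p hp => ?_
  rw [predErrorCoeff, if_neg (by simp at hp; omega), neg_mul]

theorem predErrorCoeff_mul_predErrorCoeff (hb0 : b 0 = 1) (R : ℤ → ℝ) (p q : ℕ) :
    predErrorCoeff b p * predErrorCoeff b q * R ((q : ℤ) - (p : ℤ)) =
      (if p = q then b p ^ 2 * R 0 else 0) -
        if p ≠ q then (if p = 0 ∨ q = 0 then (1 : ℝ) else -1) * b p * b q * R ((q : ℤ) - (p : ℤ))
        else 0 := by
  unfold predErrorCoeff
  rcases eq_or_ne p q with rfl | hpq
  · split_ifs <;> simp_all [sq]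
  · rcases Nat.eq_zero_or_pos p with rfl | hp <;> rcases Nat.eq_zero_or_pos q with rfl | hq <;>
      simp_all [Nat.pos_iff_ne_zero]

variable {Ω : Type*} [MeasurableSpace Ω] {μ : Measure Ω} {y : ℤ → Ω → ℝ} {R : ℤ → ℝ}

theorem sum_sq_mul_integral_sq_sub_integral_predError
    (hint : ∀ n m, Integrable (fun ω => y n ω * y m ω) μ)
    (hR : ∀ n m, ∫ ω, y n ω * y m ω ∂μ = R (n - m)) (hb0 : b 0 = 1) (N : ℕ) (n : ℤ) :
    (∑ p ∈ range (N + 1), b p ^ 2) * ∫ ω, y n ω ^ 2 ∂μ -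
        ∫ ω, (y n ω - ∑ p ∈ Icc 1 N, b p * y (n - p) ω) ^ 2 ∂μ =
      offDiagCorr b N R := by
  have herr : ∀ ω, y n ω - ∑ p ∈ Icc 1 N, b p * y (n - p) ω =
      ∑ p ∈ range (N + 1), predErrorCoeff b p * y (n - p) ω := fun ω => by
    have h := sub_sum_Icc_eq_sum_range_predErrorCoeff (b := b) N fun p => y (n - p) ω
    rwa [Nat.cast_zero, sub_zero] at h
  have hsignal : ∫ ω, y n ω ^ 2 ∂μ = R 0 := by simpa [sq] using hR n n
  have herror : ∫ ω, (y n ω - ∑ p ∈ Icc 1 N, b p * y (n - p) ω) ^ 2 ∂μ =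
      ∑ p ∈ range (N + 1), ∑ q ∈ range (N + 1),
        predErrorCoeff b p * predErrorCoeff b q * R ((q : ℤ) - (p : ℤ)) := by
    simp only [herr, sq]
    rw [integral_sum_mul_sum _ _ _ _ fun p _ q _ => hint _ _]
    simp only [hR, sub_sub_sub_cancel_left]
  rw [hsignal, herror, offDiagCorr]
  simp only [predErrorCoeff_mul_predErrorCoeff hb0, sum_sub_distrib, sum_ite_eq, sum_mul]
  rw [sum_congr rfl fun p hp => if_pos hp]
  ring

end PredictionError

section NoisyMixture

variable {Ω ι κ : Type*} [Fintype ι] [Fintype κ] {s : ι → ℤ → Ω → ℝ} {v : κ → ℤ → Ω → ℝ}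
  {y : ℤ → Ω → ℝ} {g : ι → ℝ} {w : κ → ℝ}

theorem output_mul_output_eq (hy : ∀ n ω, y n ω = (∑ l, g l * s l n ω) + ∑ i, w i * v i n ω)
    (n m : ℤ) : (fun ω => y n ω * y m ω) = fun ω =>
      (∑ l, g l * s l n ω) * (∑ k, g k * s k m ω) +
        ((∑ l, g l * s l n ω) * (∑ i, w i * v i m ω) +
          ((∑ l, g l * s l m ω) * (∑ i, w i * v i n ω) +
            (∑ i, w i * v i n ω) * (∑ j, w j * v j m ω))) := by
  funext ω
  rw [hy n, hy m]
  ring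

variable [MeasurableSpace Ω] {μ : Measure Ω}

theorem integral_sources_mul_sources [DecidableEq ι] {ρ : ι → ℤ → ℝ}
    (hss_int : ∀ k l n m, Integrable (fun ω => s k n ω * s l m ω) μ)
    (hss : ∀ k l n m, ∫ ω, s k n ω * s l m ω ∂μ = if k = l then ρ l (n - m) else 0)
    (n m : ℤ) :
    ∫ ω, (∑ l, g l * s l n ω) * (∑ k, g k * s k m ω) ∂μ = ∑ l, g l ^ 2 * ρ l (n - m) := by
  rw [integral_sum_mul_sum _ _ _ _ fun k _ l _ => hss_int k l n m]
  simp [hss, sq]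

theorem integral_sources_mul_noise
    (hsv_int : ∀ l i n m, Integrable (fun ω => s l n ω * v i m ω) μ)
    (hsv : ∀ l i n m, ∫ ω, s l n ω * v i m ω ∂μ = 0) (n m : ℤ) :
    ∫ ω, (∑ l, g l * s l n ω) * (∑ i, w i * v i m ω) ∂μ = 0 := by
  rw [integral_sum_mul_sum _ _ _ _ fun l _ i _ => hsv_int l i n m]
  simp [hsv]

theorem integral_noise_mul_noise [DecidableEq κ] {σv : ℝ}
    (hvv_int : ∀ i j n m, Integrable (fun ω => v i n ω * v j m ω) μ)
    (hvv : ∀ i j n m, ∫ ω, v i n ω * v j m ω ∂μ = if i = j ∧ n = m then σv ^ 2 else 0)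
    (n m : ℤ) :
    ∫ ω, (∑ i, w i * v i n ω) * (∑ j, w j * v j m ω) ∂μ =
      if n = m then σv ^ 2 * (w ⬝ᵥ w) else 0 := by
  rw [integral_sum_mul_sum _ _ _ _ fun i _ j _ => hvv_int i j n m]
  split_ifs with hnm
  · simp [hvv, hnm, dotProduct, mul_sum, mul_comm]
  · simp [hvv, hnm]

theorem integrable_output_mul_output
    (hss_int : ∀ k l n m, Integrable (fun ω => s k n ω * s l m ω) μ)
    (hsv_int : ∀ l i n m, Integrable (fun ω => s l n ω * v i m ω) μ)
    (hvv_int : ∀ i j n m, Integrable (fun ω => v i n ω * v j m ω) μ)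
    (hy : ∀ n ω, y n ω = (∑ l, g l * s l n ω) + ∑ i, w i * v i n ω) (n m : ℤ) :
    Integrable (fun ω => y n ω * y m ω) μ := by
  rw [output_mul_output_eq hy]
  exact (integrable_sum_mul_sum _ _ _ _ fun k _ l _ => hss_int k l n m).add <|
    (integrable_sum_mul_sum _ _ _ _ fun l _ i _ => hsv_int l i n m).add <|
    (integrable_sum_mul_sum _ _ _ _ fun l _ i _ => hsv_int l i m n).add
    (integrable_sum_mul_sum _ _ _ _ fun i _ j _ => hvv_int i j n m)

theorem integral_output_mul_output [DecidableEq ι] [DecidableEq κ] {ρ : ι → ℤ → ℝ} {σv : ℝ}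
    (hss_int : ∀ k l n m, Integrable (fun ω => s k n ω * s l m ω) μ)
    (hsv_int : ∀ l i n m, Integrable (fun ω => s l n ω * v i m ω) μ)
    (hvv_int : ∀ i j n m, Integrable (fun ω => v i n ω * v j m ω) μ)
    (hss : ∀ k l n m, ∫ ω, s k n ω * s l m ω ∂μ = if k = l then ρ l (n - m) else 0)
    (hvv : ∀ i j n m, ∫ ω, v i n ω * v j m ω ∂μ = if i = j ∧ n = m then σv ^ 2 else 0)
    (hsv : ∀ l i n m, ∫ ω, s l n ω * v i m ω ∂μ = 0)
    (hy : ∀ n ω, y n ω = (∑ l, g l * s l n ω) + ∑ i, w i * v i n ω) (n m : ℤ) :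
    ∫ ω, y n ω * y m ω ∂μ =
      (∑ l, g l ^ 2 * ρ l (n - m)) + if n - m = 0 then σv ^ 2 * (w ⬝ᵥ w) else 0 := by
  have hSS := integrable_sum_mul_sum (μ := μ) univ univ g g fun k _ l _ => hss_int k l n m
  have hSV := integrable_sum_mul_sum (μ := μ) univ univ g w fun l _ i _ => hsv_int l i n m
  have hVS := integrable_sum_mul_sum (μ := μ) univ univ g w fun l _ i _ => hsv_int l i m n
  have hVV := integrable_sum_mul_sum (μ := μ) univ univ w w fun i _ j _ => hvv_int i j n m
  rw [output_mul_output_eq hy, integral_add hSS, integral_add hSV, integral_add hVS hVV,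
    integral_sources_mul_sources hss_int hss, integral_sources_mul_noise hsv_int hsv,
    integral_sources_mul_noise hsv_int hsv, integral_noise_mul_noise hvv_int hvv]
  · simp only [sub_eq_zero, zero_add]
  · exact hVS.add hVV
  · exact hSV.add (hVS.add hVV)

end NoisyMixture

theorem stmt_8_general (Ω : Type*) [MeasureSpace Ω]
    (L M P Pd : ℕ)
    (s : Fin L → ℤ → Ω → ℝ) (v : Fin M → ℤ → Ω → ℝ)
    (ρ : Fin L → ℤ → ℝ) (σv : ℝ)
    (hss_int : ∀ (k l : Fin L) (n m : ℤ), Integrable fun ω => s k n ω * s l m ω)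
    (hsv_int : ∀ (l : Fin L) (i : Fin M) (n m : ℤ), Integrable fun ω => s l n ω * v i m ω)
    (hvv_int : ∀ (i j : Fin M) (n m : ℤ), Integrable fun ω => v i n ω * v j m ω)
    (hss : ∀ (k l : Fin L) (n m : ℤ),
      ∫ ω, s k n ω * s l m ω = if k = l then ρ l (n - m) else 0)
    (hvv : ∀ (i j : Fin M) (n m : ℤ),
      ∫ ω, v i n ω * v j m ω = if i = j ∧ n = m then σv ^ 2 else 0)
    (hsv : ∀ (l : Fin L) (i : Fin M) (n m : ℤ), ∫ ω, s l n ω * v i m ω = 0)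
    (A : Matrix (Fin M) (Fin L) ℝ) (w : Fin M → ℝ)
    (x : Fin M → ℤ → Ω → ℝ)
    (hx : ∀ i n ω, x i n ω = (∑ l, A i l * s l n ω) + v i n ω)
    (y : ℤ → Ω → ℝ) (hy : ∀ n ω, y n ω = ∑ i, w i * x i n ω)
    (b d : ℕ → ℝ) (hb0 : b 0 = 1) (hd0 : d 0 = 1)
    (qc ac : ℝ)
    (hqc : qc = ∑ p ∈ Finset.range (P + 1), (b p) ^ 2)
    (hac : ac = ∑ p ∈ Finset.range (Pd + 1), (d p) ^ 2)
    (e f : ℤ → Ω → ℝ)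
    (he : ∀ n ω, e n ω = y n ω - ∑ p ∈ Finset.Icc 1 P, b p * y (n - (p : ℤ)) ω)
    (hf : ∀ n ω, f n ω = y n ω - ∑ p ∈ Finset.Icc 1 Pd, d p * y (n - (p : ℤ)) ω)
    (g : Fin L → ℝ) (hg : g = Aᵀ *ᵥ w)
    (rhat rtil : Fin L → ℝ)
    (hrhat : ∀ l, rhat l = ∑ p ∈ Finset.range (P + 1), ∑ q ∈ Finset.range (P + 1),
      if p ≠ q then
        (if p = 0 ∨ q = 0 then (1 : ℝ) else -1) * b p * b q * ρ l ((q : ℤ) - (p : ℤ))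
      else 0)
    (hrtil : ∀ l, rtil l = ∑ p ∈ Finset.range (Pd + 1), ∑ q ∈ Finset.range (Pd + 1),
      if p ≠ q then
        (if p = 0 ∨ q = 0 then (1 : ℝ) else -1) * d p * d q * ρ l ((q : ℤ) - (p : ℤ))
      else 0) :
    ∀ n : ℤ,
      (qc * (∫ ω, (y n ω) ^ 2) - ∫ ω, (e n ω) ^ 2) /
          (ac * (∫ ω, (y n ω) ^ 2) - ∫ ω, (f n ω) ^ 2) =
        (∑ l, (g l) ^ 2 * rhat l) / (∑ l, (g l) ^ 2 * rtil l) := by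
  intro n
  have hout : ∀ n ω, y n ω = (∑ l, g l * s l n ω) + ∑ i, w i * v i n ω := fun n ω => by
    have hxn : (fun i => x i n ω) = A *ᵥ (fun l => s l n ω) + fun i => v i n ω :=
      funext fun i => hx i n ω
    rw [hy, ← dotProduct, hxn, dotProduct_add, dotProduct_mulVec, ← mulVec_transpose, ← hg]
    rfl
  have hint := integrable_output_mul_output hss_int hsv_int hvv_int hout
  set R : ℤ → ℝ := fun k => (∑ l, g l ^ 2 * ρ l k) + if k = 0 then σv ^ 2 * (w ⬝ᵥ w) else 0
  have hcov : ∀ n m, ∫ ω, y n ω * y m ω = R (n - m) :=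
    integral_output_mul_output hss_int hsv_int hvv_int hss hvv hsv hout
  have hrhat' : rhat = fun l => offDiagCorr b P (ρ l) := funext hrhat
  have hrtil' : rtil = fun l => offDiagCorr d Pd (ρ l) := funext hrtil
  simp only [he, hf]
  rw [hqc, hac, sum_sq_mul_integral_sq_sub_integral_predError hint hcov hb0,
    sum_sq_mul_integral_sq_sub_integral_predError hint hcov hd0, offDiagCorr_add_ite_zero,
    offDiagCorr_add_ite_zero, offDiagCorr_sum_mul, offDiagCorr_sum_mul, hrhat', hrtil']

/-- Dual-linear-predictor cost as a noise-free ratio of quadratic forms: under the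
noisy mixing model with stationary uncorrelated sources and white noise, with two
linear predictors (coefficients `b`, `d`, errors `e`, `f`), if `∑_l g_l² r̃_l ≠ 0`
then `(q_c E[y²] − E[e²]) / (a_c E[y²] − E[f²]) = (∑_l g_l² r̂_l)/(∑_l g_l² r̃_l)`,
where `g = Aᵀ w`; in particular the ratio is independent of the noise variance. -/
theorem stmt_8 (Ω : Type*) [MeasureSpace Ω] [IsProbabilityMeasure (volume : Measure Ω)]
    (L M P Pd : ℕ)
    (s : Fin L → ℤ → Ω → ℝ) (v : Fin M → ℤ → Ω → ℝ)
    (ρ : Fin L → ℤ → ℝ) (σv : ℝ)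
    (hss_int : ∀ (k l : Fin L) (n m : ℤ), Integrable fun ω => s k n ω * s l m ω)
    (hsv_int : ∀ (l : Fin L) (i : Fin M) (n m : ℤ), Integrable fun ω => s l n ω * v i m ω)
    (hvv_int : ∀ (i j : Fin M) (n m : ℤ), Integrable fun ω => v i n ω * v j m ω)
    (hss : ∀ (k l : Fin L) (n m : ℤ),
      ∫ ω, s k n ω * s l m ω = if k = l then ρ l (n - m) else 0)
    (hvv : ∀ (i j : Fin M) (n m : ℤ),
      ∫ ω, v i n ω * v j m ω = if i = j ∧ n = m then σv ^ 2 else 0)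
    (hsv : ∀ (l : Fin L) (i : Fin M) (n m : ℤ), ∫ ω, s l n ω * v i m ω = 0)
    (A : Matrix (Fin M) (Fin L) ℝ) (w : Fin M → ℝ)
    (x : Fin M → ℤ → Ω → ℝ)
    (hx : ∀ i n ω, x i n ω = (∑ l, A i l * s l n ω) + v i n ω)
    (y : ℤ → Ω → ℝ) (hy : ∀ n ω, y n ω = ∑ i, w i * x i n ω)
    (b d : ℕ → ℝ) (hb0 : b 0 = 1) (hd0 : d 0 = 1)
    (qc ac : ℝ)
    (hqc : qc = ∑ p ∈ Finset.range (P + 1), (b p) ^ 2)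
    (hac : ac = ∑ p ∈ Finset.range (Pd + 1), (d p) ^ 2)
    (e f : ℤ → Ω → ℝ)
    (he : ∀ n ω, e n ω = y n ω - ∑ p ∈ Finset.Icc 1 P, b p * y (n - (p : ℤ)) ω)
    (hf : ∀ n ω, f n ω = y n ω - ∑ p ∈ Finset.Icc 1 Pd, d p * y (n - (p : ℤ)) ω)
    (g : Fin L → ℝ) (hg : g = Aᵀ *ᵥ w)
    (rhat rtil : Fin L → ℝ)
    (hrhat : ∀ l, rhat l = ∑ p ∈ Finset.range (P + 1), ∑ q ∈ Finset.range (P + 1),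
      if p ≠ q then
        (if p = 0 ∨ q = 0 then (1 : ℝ) else -1) * b p * b q * ρ l ((q : ℤ) - (p : ℤ))
      else 0)
    (hrtil : ∀ l, rtil l = ∑ p ∈ Finset.range (Pd + 1), ∑ q ∈ Finset.range (Pd + 1),
      if p ≠ q then
        (if p = 0 ∨ q = 0 then (1 : ℝ) else -1) * d p * d q * ρ l ((q : ℤ) - (p : ℤ))
      else 0)
    (hdenom : (∑ l, (g l) ^ 2 * rtil l) ≠ 0) :
    ∀ n : ℤ,
      (qc * (∫ ω, (y n ω) ^ 2) - ∫ ω, (e n ω) ^ 2) /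
          (ac * (∫ ω, (y n ω) ^ 2) - ∫ ω, (f n ω) ^ 2) =
        (∑ l, (g l) ^ 2 * rhat l) / (∑ l, (g l) ^ 2 * rtil l) :=
  stmt_8_general Ω L M P Pd s v ρ σv hss_int hsv_int hvv_int hss hvv hsv A w x hx y hy b d hb0 hd0
    qc ac hqc hac e f he hf g hg rhat rtil hrhat hrtil
end
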